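/- In the polynomial ring ℂ[a₂, a₃, …, b₃, b₄, …] localized at nothing (i.e., the full arc-space coordinate ring restricted to a₀=a₁=b₀=b₁=b₂=0), the ideal I = (a₂³ − b₃², 3a₂²a₃ − 2b₃b₄) has exactly two minimal primes: one containing (a₂, b₃), namely the prime (a₂, b₃) itself, and one not containing a₂b₃, namely the contraction of I from the localization at a₂b₃. Equivalently, V(I) = V(I : (a₂b₃)^∞) ∪ V(a₂, b₃) and both pieces are irreducible. -/

import Mathlib

open MvPolynomial

/-- The index type of the arc-space variables `a₂, a₃, …` and `b₃, b₄, …`. -/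
abbrev ArcVar : Type := {i : ℕ // 2 ≤ i} ⊕ {j : ℕ // 3 ≤ j}

/-- The arc variable `aᵢ` (for `i ≥ 2`). -/
noncomputable def arcA (i : {i : ℕ // 2 ≤ i}) : MvPolynomial ArcVar ℂ := X (Sum.inl i)

/-- The arc variable `bⱼ` (for `j ≥ 3`). -/
noncomputable def arcB (j : {j : ℕ // 3 ≤ j}) : MvPolynomial ArcVar ℂ := X (Sum.inr j)

/-- The ideal `I = (a₂³ − b₃², 3a₂²a₃ − 2b₃b₄)` of `ℂ[a₂, a₃, …, b₃, b₄, …]`. -/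
noncomputable def arcIdealPoly : Ideal (MvPolynomial ArcVar ℂ) :=
  Ideal.span
    { (arcA ⟨2, le_refl 2⟩) ^ 3 - (arcB ⟨3, le_refl 3⟩) ^ 2,
      3 * (arcA ⟨2, le_refl 2⟩) ^ 2 * arcA ⟨3, Nat.le_succ 2⟩
        - 2 * arcB ⟨3, le_refl 3⟩ * arcB ⟨4, Nat.le_succ 3⟩ }

/-!
Write `f = a₂b₃`. A prime containing `I` and `f` contains both `a₂` and `b₃`, because
`a₂³ ≡ b₃² (mod I)`; a prime containing `I` but not `f` contains the contraction `Q` of `I`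
from the localization at `f`. So every prime over `I` contains `P = (a₂, b₃)` or `Q`, and it
remains to see that both are prime and incomparable. `P` is generated by variables. `Q` is the
kernel of the cusp parametrization `a₂ ↦ 4t², b₃ ↦ 8t³, b₄ ↦ 3ta₃` (the variable `a₂` itself
serving as `t`): modulo `I` and with `a₂b₃` inverted, `t ↦ b₃ / 2a₂` inverts it. Finally
`f ∈ P \ Q`, while `9a₂a₃² − 4b₄²` lies in `Q` (it vanishes under the parametrization) but not
in `P`.
-/

namespace Ideal

variable {R : Type*} [CommRing R]

theorem IsPrime.mem_and_mem_of_pow_sub_pow_mem {p : Ideal R} (hp : p.IsPrime) {a b : R}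
    {m n : ℕ} (hm : m ≠ 0) (hn : n ≠ 0) (h : a ^ m - b ^ n ∈ p) (hab : a * b ∈ p) :
    a ∈ p ∧ b ∈ p := by
  rcases hp.mem_or_mem hab with ha | hb
  · have hbn : b ^ n ∈ p := by
      simpa using p.sub_mem (p.pow_mem_of_mem ha m (Nat.pos_of_ne_zero hm)) h
    exact ⟨ha, hp.mem_of_pow_mem n hbn⟩
  · have ham : a ^ m ∈ p := by
      simpa using p.add_mem h (p.pow_mem_of_mem hb n (Nat.pos_of_ne_zero hn))
    exact ⟨hp.mem_of_pow_mem m ham, hb⟩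

theorem minimalPrimes_eq_pair {I P Q : Ideal R} (hP : P.IsPrime) (hQ : Q.IsPrime)
    (hIP : I ≤ P) (hIQ : I ≤ Q) (hPQ : ¬ P ≤ Q) (hQP : ¬ Q ≤ P)
    (h : ∀ p : Ideal R, p.IsPrime → I ≤ p → P ≤ p ∨ Q ≤ p) :
    I.minimalPrimes = {P, Q} := by
  ext p
  constructor
  · rintro ⟨⟨hp, hIp⟩, hmin⟩
    rcases h p hp hIp with hPp | hQp
    · exact .inl (le_antisymm (hmin ⟨hP, hIP⟩ hPp) hPp)
    · exact .inr (le_antisymm (hmin ⟨hQ, hIQ⟩ hQp) hQp)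
  · rintro (rfl | rfl)
    · refine ⟨⟨hP, hIP⟩, fun q ⟨hq, hIq⟩ hqp => ?_⟩
      exact (h q hq hIq).resolve_right fun hQq => hQP (hQq.trans hqp)
    · refine ⟨⟨hQ, hIQ⟩, fun q ⟨hq, hIq⟩ hqp => ?_⟩
      exact (h q hq hIq).resolve_left fun hPq => hPQ (hPq.trans hqp)

end Ideal

namespace IsLocalization.Away

variable {R S : Type*} [CommRing R] [CommRing S] [Algebra R S] {f : R}
  [IsLocalization.Away f S]

include f in
theorem comap_map_le {I p : Ideal R} (hp : p.IsPrime) (hIp : I ≤ p) (hf : f ∉ p) :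
    (I.map (algebraMap R S)).comap (algebraMap R S) ≤ p := by
  intro x hx
  obtain ⟨_, ⟨n, rfl⟩, hx⟩ :=
    (algebraMap_mem_map_algebraMap_iff (Submonoid.powers f) S I x).1 hx
  exact (hp.mem_or_mem (hIp hx)).resolve_left fun h => hf (hp.mem_of_pow_mem n h)

theorem notMem_comap_map {I : Ideal R}
    (h : (I.map (algebraMap R S)).comap (algebraMap R S) ≠ ⊤) :
    f ∉ (I.map (algebraMap R S)).comap (algebraMap R S) := fun hf =>
  h (by rw [Ideal.eq_top_of_isUnit_mem _ (Ideal.mem_comap.1 hf) (algebraMap_isUnit f),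
    Ideal.comap_top])

theorem comap_map_eq_ker {T : Type*} [CommRing T] [IsDomain T] {I : Ideal R} (φ : R →+* T)
    (hI : I ≤ RingHom.ker φ) (hf : φ f ≠ 0) (ψ : T →+* S ⧸ I.map (algebraMap R S))
    (hψ : ψ.comp φ = (Ideal.Quotient.mk _).comp (algebraMap R S)) :
    (I.map (algebraMap R S)).comap (algebraMap R S) = RingHom.ker φ := by
  ext x
  constructor
  · intro hx
    obtain ⟨_, ⟨n, rfl⟩, hx⟩ :=
      (algebraMap_mem_map_algebraMap_iff (Submonoid.powers f) S I x).1 hx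
    have : φ f ^ n * φ x = 0 := by simpa using hI hx
    exact (mul_eq_zero.1 this).resolve_left (pow_ne_zero n hf)
  · intro hx
    have := congr($hψ x)
    simp only [RingHom.comp_apply, RingHom.mem_ker.1 hx, map_zero] at this
    exact Ideal.mem_comap.2 (Ideal.Quotient.eq_zero_iff_mem.1 this.symm)

end IsLocalization.Away

namespace MvPolynomial

variable {σ R : Type*} [CommRing R]

theorem ker_aeval_indicator_compl (s : Set σ) :
    RingHom.ker (aeval (sᶜ.indicator X) : MvPolynomial σ R →ₐ[R] MvPolynomial σ R) =
      Ideal.span (X '' s) := by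
  refine le_antisymm (fun x hx => ?_) (Ideal.span_le.2 ?_)
  · have hmk : (Ideal.Quotient.mkₐ R (Ideal.span (X '' s))).comp (aeval (sᶜ.indicator X)) =
        Ideal.Quotient.mkₐ R _ := by
      refine algHom_ext fun i => ?_
      by_cases hi : i ∈ s
      · have hXi : (X i : MvPolynomial σ R) ∈ Ideal.span (X '' s) :=
          Ideal.subset_span (Set.mem_image_of_mem X hi)
        simp [Set.indicator_of_notMem (Set.notMem_compl_iff.2 hi),
          (Ideal.Quotient.eq_zero_iff_mem.2 hXi).symm]
      · simp [Set.indicator_of_mem (Set.mem_compl hi)]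
    have := congr($hmk x)
    simp only [AlgHom.comp_apply, RingHom.mem_ker.1 hx, map_zero] at this
    exact Ideal.Quotient.eq_zero_iff_mem.1 this.symm
  · rintro _ ⟨i, hi, rfl⟩
    simp [Set.indicator_of_notMem (Set.notMem_compl_iff.2 hi)]

theorem isPrime_span_X_image [IsDomain R] (s : Set σ) :
    (Ideal.span (X '' s) : Ideal (MvPolynomial σ R)).IsPrime :=
  ker_aeval_indicator_compl (R := R) s ▸ RingHom.ker_isPrime _

end MvPolynomial

theorem cusp_param_of_relations {Q : Type*} [CommRing Q] {A B A₃ B₄ t : Q} (hA : IsUnit A)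
    (h2 : IsUnit (2 : Q)) (h₁ : A ^ 3 = B ^ 2) (h₂ : 3 * A ^ 2 * A₃ = 2 * B * B₄)
    (ht : 2 * t * A = B) : 4 * t ^ 2 = A ∧ 8 * t ^ 3 = B ∧ 3 * t * A₃ = B₄ := by
  have hsq : 4 * t ^ 2 = A :=
    (hA.pow 2).mul_left_cancel (by linear_combination (2 * t * A + B) * ht - h₁)
  have hB : IsUnit B := by
    have : IsUnit (B ^ 2) := h₁ ▸ hA.pow 3
    exact (isUnit_pow_iff two_ne_zero).1 this
  refine ⟨hsq, by linear_combination 2 * t * hsq + ht, ?_⟩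
  exact (h2.mul hB).mul_left_cancel
    (by linear_combination (-6 * t * A₃) * ht + 3 * A * A₃ * hsq + h₂)

section Arc

local notation "a₂" => arcA (Subtype.mk 2 (le_refl 2))
local notation "a₃" => arcA (Subtype.mk 3 (Nat.le_succ 2))
local notation "b₃" => arcB (Subtype.mk 3 (le_refl 3))
local notation "b₄" => arcB (Subtype.mk 4 (Nat.le_succ 3))

theorem arcIdealPoly.cusp_mem : a₂ ^ 3 - b₃ ^ 2 ∈ arcIdealPoly :=
  Ideal.subset_span (by simp)

theorem arcIdealPoly.cusp_deriv_mem : 3 * a₂ ^ 2 * a₃ - 2 * b₃ * b₄ ∈ arcIdealPoly :=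
  Ideal.subset_span (by simp)

theorem arcIdealPoly.le_span : arcIdealPoly ≤ Ideal.span {a₂, b₃} := by
  refine Ideal.span_le.2 (Set.insert_subset_iff.2 ⟨?_, Set.singleton_subset_iff.2 ?_⟩)
  · exact Ideal.mem_span_pair.2 ⟨a₂ ^ 2, -b₃, by ring⟩
  · exact Ideal.mem_span_pair.2 ⟨3 * a₂ * a₃, -2 * b₄, by ring⟩

theorem isPrime_span_arcA_arcB : (Ideal.span {a₂, b₃}).IsPrime := by
  rw [arcA, arcB, ← Set.image_pair]
  exact isPrime_span_X_image _

noncomputable def arcCuspParam : MvPolynomial ArcVar ℂ →ₐ[ℂ] MvPolynomial ArcVar ℂ :=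
  aeval <| Function.update (Function.update (Function.update X
    (Sum.inr ⟨4, Nat.le_succ 3⟩) (3 * a₂ * a₃)) (Sum.inr ⟨3, le_refl 3⟩) (8 * a₂ ^ 3))
    (Sum.inl ⟨2, le_refl 2⟩) (4 * a₂ ^ 2)

theorem arcCuspParam_arcA_two : arcCuspParam a₂ = 4 * a₂ ^ 2 := by
  simp [arcCuspParam, arcA]

theorem arcCuspParam_arcA_three : arcCuspParam a₃ = a₃ := by
  simp [arcCuspParam, arcA]

theorem arcCuspParam_arcB_three : arcCuspParam b₃ = 8 * a₂ ^ 3 := by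
  simp [arcCuspParam, arcB]

theorem arcCuspParam_arcB_four : arcCuspParam b₄ = 3 * a₂ * a₃ := by
  simp [arcCuspParam, arcB]

theorem arcCuspParam_X {v : ArcVar} (h2 : v ≠ Sum.inl ⟨2, le_refl 2⟩)
    (h3 : v ≠ Sum.inr ⟨3, le_refl 3⟩) (h4 : v ≠ Sum.inr ⟨4, Nat.le_succ 3⟩) :
    arcCuspParam (X v) = X v := by
  simp [arcCuspParam, h2, h3, h4]

theorem arcIdealPoly.le_ker_arcCuspParam : arcIdealPoly ≤ RingHom.ker arcCuspParam := by
  refine Ideal.span_le.2 (Set.insert_subset_iff.2 ⟨?_, Set.singleton_subset_iff.2 ?_⟩)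
  · simp only [SetLike.mem_coe, RingHom.mem_ker, map_sub, map_pow, arcCuspParam_arcA_two,
      arcCuspParam_arcB_three]
    ring
  · simp only [SetLike.mem_coe, RingHom.mem_ker, map_sub, map_mul, map_pow, map_ofNat,
      arcCuspParam_arcA_two, arcCuspParam_arcA_three, arcCuspParam_arcB_three,
      arcCuspParam_arcB_four]
    ring

noncomputable def arcWitness : MvPolynomial ArcVar ℂ := 9 * a₂ * a₃ ^ 2 - 4 * b₄ ^ 2

theorem arcCuspParam_arcWitness : arcCuspParam arcWitness = 0 := by
  simp only [arcWitness, map_sub, map_mul, map_pow, map_ofNat, arcCuspParam_arcA_two,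
    arcCuspParam_arcA_three, arcCuspParam_arcB_four]
  ring

theorem arcWitness_notMem_span : arcWitness ∉ Ideal.span {a₂, b₃} := by
  rw [arcWitness, arcA, arcB, ← Set.image_pair, ← ker_aeval_indicator_compl, RingHom.mem_ker]
  simp [arcA, arcB, Set.indicator, map_ofNat]

theorem exists_comp_arcCuspParam_eq {Q : Type*} [CommRing Q] [Algebra ℂ Q]
    (q : MvPolynomial ArcVar ℂ →ₐ[ℂ] Q) (hq : arcIdealPoly ≤ RingHom.ker q)
    (ha : IsUnit (q a₂)) : ∃ ψ : MvPolynomial ArcVar ℂ →ₐ[ℂ] Q, ψ.comp arcCuspParam = q := by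
  have h2 : IsUnit (2 : Q) := by
    simpa [map_ofNat] using (IsUnit.mk0 (2 : ℂ) two_ne_zero).map (algebraMap ℂ Q)
  set t := Ring.inverse (2 * q a₂) * q b₃
  have ht : 2 * t * q a₂ = q b₃ := by
    calc 2 * t * q a₂ = 2 * q a₂ * Ring.inverse (2 * q a₂) * q b₃ := by ring
      _ = q b₃ := by rw [Ring.mul_inverse_cancel _ (h2.mul ha), one_mul]
  have h₁ : q a₂ ^ 3 = q b₃ ^ 2 := by
    simpa [sub_eq_zero] using hq arcIdealPoly.cusp_mem
  have h₂ : 3 * q a₂ ^ 2 * q a₃ = 2 * q b₃ * q b₄ := by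
    simpa [sub_eq_zero, map_ofNat] using hq arcIdealPoly.cusp_deriv_mem
  obtain ⟨hA, hB, hB₄⟩ := cusp_param_of_relations ha h2 h₁ h₂ ht
  set ψ : MvPolynomial ArcVar ℂ →ₐ[ℂ] Q :=
    aeval (Function.update (fun v => q (X v)) (Sum.inl ⟨2, le_refl 2⟩) t)
  have hψ2 : ψ a₂ = t := by simp [ψ, arcA]
  have hψ3 : ψ a₃ = q a₃ := by simp [ψ, arcA]
  refine ⟨ψ, algHom_ext fun v => ?_⟩
  rw [AlgHom.comp_apply]
  rcases eq_or_ne v (Sum.inl ⟨2, le_refl 2⟩) with rfl | hv2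
  · change ψ (arcCuspParam a₂) = q a₂
    simp [arcCuspParam_arcA_two, hψ2, hA, map_ofNat]
  rcases eq_or_ne v (Sum.inr ⟨3, le_refl 3⟩) with rfl | hv3
  · change ψ (arcCuspParam b₃) = q b₃
    simp [arcCuspParam_arcB_three, hψ2, hB, map_ofNat]
  rcases eq_or_ne v (Sum.inr ⟨4, Nat.le_succ 3⟩) with rfl | hv4
  · change ψ (arcCuspParam b₄) = q b₄
    simp [arcCuspParam_arcB_four, hψ2, hψ3, hB₄, map_ofNat]
  simp [arcCuspParam_X hv2 hv3 hv4, ψ, hv2]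

theorem arcIdealPoly.comap_map_eq_ker :
    (arcIdealPoly.map (algebraMap _ (Localization.Away (a₂ * b₃)))).comap (algebraMap _ _) =
      RingHom.ker arcCuspParam := by
  set S := Localization.Away (a₂ * b₃)
  set q : MvPolynomial ArcVar ℂ →ₐ[ℂ] S ⧸ arcIdealPoly.map (algebraMap _ S) :=
    (Ideal.Quotient.mkₐ ℂ _).comp (IsScalarTower.toAlgHom ℂ _ S)
  have hq : arcIdealPoly ≤ RingHom.ker q := fun x hx =>
    Ideal.Quotient.eq_zero_iff_mem.2 (Ideal.mem_map_of_mem _ hx)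
  have ha : IsUnit (q a₂) := by
    have := IsLocalization.Away.algebraMap_isUnit (S := S) (a₂ * b₃)
    rw [map_mul] at this
    exact (isUnit_of_mul_isUnit_left this).map (Ideal.Quotient.mk _)
  obtain ⟨ψ, hψ⟩ := exists_comp_arcCuspParam_eq q hq ha
  refine IsLocalization.Away.comap_map_eq_ker (f := a₂ * b₃) arcCuspParam.toRingHom
    arcIdealPoly.le_ker_arcCuspParam ?_ ψ.toRingHom (congrArg AlgHom.toRingHom hψ)
  change arcCuspParam (a₂ * b₃) ≠ 0
  rw [map_mul, arcCuspParam_arcA_two, arcCuspParam_arcB_three]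
  simp [arcA]

theorem arcIdealPoly.span_le_or_comap_map_le (p : Ideal (MvPolynomial ArcVar ℂ))
    (hp : p.IsPrime) (hIp : arcIdealPoly ≤ p) :
    Ideal.span {a₂, b₃} ≤ p ∨
      (arcIdealPoly.map (algebraMap _ (Localization.Away (a₂ * b₃)))).comap (algebraMap _ _) ≤
        p := by
  by_cases hf : a₂ * b₃ ∈ p
  · obtain ⟨ha, hb⟩ := hp.mem_and_mem_of_pow_sub_pow_mem three_ne_zero two_ne_zero
      (hIp arcIdealPoly.cusp_mem) hf
    exact .inl (Ideal.span_le.2 (Set.insert_subset_iff.2 ⟨ha, Set.singleton_subset_iff.2 hb⟩))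
  · exact .inr (IsLocalization.Away.comap_map_le hp hIp hf)

theorem arcIdealPoly.not_span_le_comap_map :
    ¬ Ideal.span {a₂, b₃} ≤
      (arcIdealPoly.map (algebraMap _ (Localization.Away (a₂ * b₃)))).comap (algebraMap _ _) :=
  fun h => IsLocalization.Away.notMem_comap_map (f := a₂ * b₃)
    (arcIdealPoly.comap_map_eq_ker ▸ (RingHom.ker_isPrime _).ne_top)
    (h (Ideal.mul_mem_right _ _ (Ideal.subset_span (Set.mem_insert _ _))))

theorem arcIdealPoly.not_comap_map_le_span :
    ¬ (arcIdealPoly.map (algebraMap _ (Localization.Away (a₂ * b₃)))).comap (algebraMap _ _) ≤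
      Ideal.span {a₂, b₃} := by
  rw [arcIdealPoly.comap_map_eq_ker]
  exact fun h => arcWitness_notMem_span (h arcCuspParam_arcWitness)

end Arc

/-- In `ℂ[a₂, a₃, …, b₃, b₄, …]`, the ideal `I = (a₂³ − b₃², 3a₂²a₃ − 2b₃b₄)` has
exactly two minimal primes: the prime `(a₂, b₃)`, and the contraction of `I` from
the localization at `a₂b₃`. -/
theorem arcIdeal_minimalPrimes :
    arcIdealPoly.minimalPrimes =
      { Ideal.span {arcA ⟨2, le_refl 2⟩, arcB ⟨3, le_refl 3⟩},
        Ideal.comap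
          (algebraMap (MvPolynomial ArcVar ℂ)
            (Localization.Away (arcA ⟨2, le_refl 2⟩ * arcB ⟨3, le_refl 3⟩)))
          (Ideal.map
            (algebraMap (MvPolynomial ArcVar ℂ)
              (Localization.Away (arcA ⟨2, le_refl 2⟩ * arcB ⟨3, le_refl 3⟩)))
            arcIdealPoly) } :=
  Ideal.minimalPrimes_eq_pair isPrime_span_arcA_arcB
    (arcIdealPoly.comap_map_eq_ker ▸ RingHom.ker_isPrime _) arcIdealPoly.le_span
    Ideal.le_comap_map arcIdealPoly.not_span_le_comap_map arcIdealPoly.not_comap_map_le_span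
    arcIdealPoly.span_le_or_comap_map_le
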